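/- Let A and B be d×d real symmetric positive semidefinite matrices, and let √A denote the unique positive semidefinite square root of A. Then Tr(A) + Tr(B) − 2 Tr((√A · B · √A)^{1/2}) ≥ 0, and this quantity equals 0 when A = B. -/

import Mathlib

open Matrix
open scoped Classical

/-- The unique positive semidefinite square root of a positive semidefinite real matrix
(junk value `0` on matrices that are not positive semidefinite). -/
noncomputable def psdSqrt {d : ℕ} (M : Matrix (Fin d) (Fin d) ℝ) :
    Matrix (Fin d) (Fin d) ℝ :=
  if h : M.PosSemidef then
    h.1.eigenvectorUnitary.1 * diagonal ((↑) ∘ (√·) ∘ h.1.eigenvalues) *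
      (star h.1.eigenvectorUnitary : Matrix (Fin d) (Fin d) ℝ)
  else 0

/-!
Write `S = √A`, `M = S B S`, and let `Q = M^{-1/2}` be taken on the support of `M` (with
`0⁻¹ = 0`), so that `Q M = √M` and `Q M Q ≤ 1`. With `C = S Q S` this gives `Tr √M = Tr (B C)`,
and expanding `0 ≤ Tr ((1 - C) B (1 - C))` yields
`2 Tr (B C) ≤ Tr B + Tr (C B C) = Tr B + Tr (S (Q M Q) S) ≤ Tr B + Tr A`.
For `A = B` one has `√A A √A = A²`, whose square root is `A`.
-/

open scoped MatrixOrder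

namespace Matrix

variable {n : Type*} [Fintype n]

lemma trace_mono {A B : Matrix n n ℝ} (h : A ≤ B) : A.trace ≤ B.trace :=
  OrderHomClass.mono (tracePositiveLinearMap n ℝ ℝ) h

variable [DecidableEq n]

lemma two_mul_trace_mul_le {B C : Matrix n n ℝ} (hB : 0 ≤ B) (hC : IsSelfAdjoint C) :
    2 * (B * C).trace ≤ B.trace + (C * B * C).trace := by
  have h := trace_mono (((IsSelfAdjoint.one _).sub hC).conjugate_nonneg hB)
  have hexp : (1 - C) * B * (1 - C) = B - C * B - B * C + C * B * C := by noncomm_ring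
  rw [hexp, trace_zero, trace_add, trace_sub, trace_sub, trace_mul_comm C B] at h
  linarith

section InvSqrt

variable {𝕜 : Type*} [RCLike 𝕜] {M : Matrix n n 𝕜}

lemma cfc_inv_sqrt_mul_self (hM : 0 ≤ M) :
    cfc (fun x : ℝ ↦ (√x)⁻¹) M * M = CFC.sqrt M := by
  -- `(√x)⁻¹` is discontinuous at `0`, but the spectrum of a matrix is finite.
  have hcont := M.finite_real_spectrum.continuousOn (fun x : ℝ ↦ (√x)⁻¹)
  rw [CFC.sqrt_eq_real_sqrt M hM, cfcₙ_eq_cfc]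
  calc _ = cfc (fun x : ℝ ↦ (√x)⁻¹ * x) M := by rw [cfc_mul _ _ M hcont, cfc_id' ℝ M]
    _ = cfc Real.sqrt M := cfc_congr fun x _ ↦ by rw [inv_mul_eq_div, Real.div_sqrt]

lemma cfc_inv_sqrt_mul_self_mul_le_one (hM : 0 ≤ M) :
    cfc (fun x : ℝ ↦ (√x)⁻¹) M * M * cfc (fun x : ℝ ↦ (√x)⁻¹) M ≤ 1 := by
  have hcont := M.finite_real_spectrum.continuousOn (fun x : ℝ ↦ (√x)⁻¹)
  rw [cfc_inv_sqrt_mul_self hM, CFC.sqrt_eq_real_sqrt M hM, cfcₙ_eq_cfc, ← cfc_mul _ _ M]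
  exact cfc_le_one _ M fun x _ ↦ mul_inv_le_one

end InvSqrt

theorem two_mul_trace_sqrt_conj_le {A B : Matrix n n ℝ} (hA : 0 ≤ A) (hB : 0 ≤ B) :
    2 * (CFC.sqrt (CFC.sqrt A * B * CFC.sqrt A)).trace ≤ A.trace + B.trace := by
  set S := CFC.sqrt A
  set M := S * B * S
  set Q := cfc (fun x : ℝ ↦ (√x)⁻¹) M
  have hS : IsSelfAdjoint S := (CFC.sqrt_nonneg A).isSelfAdjoint
  have hQ : IsSelfAdjoint Q := cfc_predicate _ M
  have hM : 0 ≤ M := hS.conjugate_nonneg hB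
  calc 2 * (CFC.sqrt M).trace = 2 * (B * (S * Q * S)).trace := by
        rw [← cfc_inv_sqrt_mul_self hM, trace_mul_comm B,
          show Q * M = Q * S * B * S by simp only [M, mul_assoc], trace_mul_comm _ S]
        simp only [mul_assoc]
    _ ≤ B.trace + (S * Q * S * B * (S * Q * S)).trace :=
        two_mul_trace_mul_le hB (hQ.conjugate_self hS)
    _ = B.trace + (S * (Q * M * Q) * S).trace := by simp only [M, mul_assoc]
    _ ≤ B.trace + (S * 1 * S).trace := by
        gcongr
        exact trace_mono (hS.conjugate_le_conjugate (cfc_inv_sqrt_mul_self_mul_le_one hM))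
    _ = A.trace + B.trace := by rw [mul_one, CFC.sqrt_mul_sqrt_self A hA, add_comm]

end Matrix

theorem psdSqrt_eq_sqrt {d : ℕ} {M : Matrix (Fin d) (Fin d) ℝ} (hM : M.PosSemidef) :
    psdSqrt M = CFC.sqrt M := by
  rw [psdSqrt, dif_pos hM, CFC.sqrt_eq_real_sqrt M hM.nonneg, cfcₙ_eq_cfc, hM.1.cfc_eq,
    IsHermitian.cfc, Unitary.conjStarAlgAut_apply]
  rfl

/-- For symmetric positive semidefinite `d × d` real matrices `A` and `B`,
the Bures quantity `Tr(A) + Tr(B) − 2 Tr((√A · B · √A)^{1/2})` is nonnegative, and it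
equals `0` when `A = B`. -/
theorem bures_nonneg_and_eq_zero_of_eq {d : ℕ}
    (A B : Matrix (Fin d) (Fin d) ℝ) (hA : A.PosSemidef) (hB : B.PosSemidef) :
    0 ≤ A.trace + B.trace - 2 * (psdSqrt (psdSqrt A * B * psdSqrt A)).trace ∧
      (A = B → A.trace + B.trace - 2 * (psdSqrt (psdSqrt A * B * psdSqrt A)).trace = 0) := by
  have hM : (CFC.sqrt A * B * CFC.sqrt A).PosSemidef :=
    ((CFC.sqrt_nonneg A).isSelfAdjoint.conjugate_nonneg hB.nonneg).posSemidef
  rw [psdSqrt_eq_sqrt hA, psdSqrt_eq_sqrt hM]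
  refine ⟨by linarith [two_mul_trace_sqrt_conj_le hA.nonneg hB.nonneg], ?_⟩
  rintro rfl
  have hSS := CFC.sqrt_mul_sqrt_self A hA.nonneg
  have hsq : CFC.sqrt A * A * CFC.sqrt A = A ^ 2 :=
    calc _ = CFC.sqrt A * (CFC.sqrt A * CFC.sqrt A) * CFC.sqrt A := by rw [hSS]
      _ = (CFC.sqrt A * CFC.sqrt A) ^ 2 := by noncomm_ring
      _ = A ^ 2 := by rw [hSS]
  rw [hsq, CFC.sqrt_sq A hA.nonneg]
  ring
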